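/- arXiv:2511.17295 — 9 statements merged into one kernel-verified Lean document; each statement's English description precedes it below -/
import Mathlib

section
/- Let (F, G) be an eigencomplementary pair of symmetric matrices F, G ∈ ℝ^{L×L}. If F is invertible, then the matrix F⁻¹G is negative semidefinite. -/
open Matrix

/-- The eigenspace of a square matrix `M` for the eigenvalue `ξ`,
as a submodule of `Fin L → ℝ`. -/
noncomputable def Eig {L : ℕ} (M : Matrix (Fin L) (Fin L) ℝ) (ξ : ℝ) :
    Submodule ℝ (Fin L → ℝ) :=
  Module.End.eigenspace (Matrix.toLin' M) ξ

/-- `F` and `G` are simultaneously diagonalizable by a common orthogonal matrix. -/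
def SimDiag {L : ℕ} (F G : Matrix (Fin L) (Fin L) ℝ) : Prop :=
  ∃ S DF DG : Matrix (Fin L) (Fin L) ℝ,
    S * Sᵀ = 1 ∧ DF.IsDiag ∧ DG.IsDiag ∧ F = S * DF * Sᵀ ∧ G = S * DG * Sᵀ

/-- The pair `(F, G)` of symmetric real matrices is eigencomplementary:
`F` is negative semidefinite, `G` is positive semidefinite, they are simultaneously
diagonalizable by a common orthogonal matrix, and if both are singular then the direct
sum of the eigenspaces of `F` for its negative eigenvalues equals the kernel of `G`. -/
def Eigencomplementary {L : ℕ} (F G : Matrix (Fin L) (Fin L) ℝ) : Prop :=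
  F.IsSymm ∧ G.IsSymm ∧ (-F).PosSemidef ∧ G.PosSemidef ∧ SimDiag F G ∧
    (¬ IsUnit F → ¬ IsUnit G →
      (⨆ ξ : {x : ℝ // x < 0}, Eig F ξ.1) = Eig G 0)

theorem stmt0 {L : ℕ} (F G : Matrix (Fin L) (Fin L) ℝ)
    (h : Eigencomplementary F G) (hF : IsUnit F) :
    (-(F⁻¹ * G)).PosSemidef := by
  obtain ⟨-, -, hFneg, hGpos, ⟨S, DF, DG, hS, hDF, hDG, hFe, hGe⟩, -⟩ := h
  have hS' : Sᵀ * S = 1 := mul_eq_one_comm.mp hS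
  set d : Fin L → ℝ := DF.diag with hd
  set e : Fin L → ℝ := DG.diag with he
  have hDFd : DF = diagonal d := (hDF.diagonal_diag).symm
  have hDGe : DG = diagonal e := (hDG.diagonal_diag).symm
  have conj : ∀ A : Matrix (Fin L) (Fin L) ℝ, Sᵀ * (S * A * Sᵀ) * S = A := by
    intro A
    calc Sᵀ * (S * A * Sᵀ) * S = Sᵀ * (S * (A * (Sᵀ * S))) := by
          simp only [Matrix.mul_assoc]
      _ = A := by rw [hS', Matrix.mul_one, ← Matrix.mul_assoc, hS', Matrix.one_mul]
  have hdetF : F.det ≠ 0 := by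
    simpa [Matrix.isUnit_iff_isUnit_det, isUnit_iff_ne_zero] using hF
  have hdne : ∀ i, d i ≠ 0 := by
    intro i hi
    apply hdetF
    rw [hFe, Matrix.det_mul, Matrix.det_mul, hDFd, Matrix.det_diagonal,
      Finset.prod_eq_zero (Finset.mem_univ i) hi]
    ring
  have hSH : (Sᵀ)ᴴ = S := by
    rw [Matrix.conjTranspose_eq_transpose_of_trivial, Matrix.transpose_transpose]
  have hDFneg : (diagonal fun i => -d i).PosSemidef := by
    have h2 : Sᵀ * (-F) * (Sᵀ)ᴴ = diagonal fun i => -d i := by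
      rw [hSH, ← Matrix.diagonal_neg, hFe, hDFd]
      calc Sᵀ * -(S * diagonal d * Sᵀ) * S = -(Sᵀ * (S * diagonal d * Sᵀ) * S) := by
            simp only [Matrix.mul_neg, Matrix.neg_mul]
        _ = -diagonal d := by rw [conj]
    rw [← h2]
    exact hFneg.mul_mul_conjTranspose_same _
  have hdle : ∀ i, d i ≤ 0 := fun i => by
    have := Matrix.posSemidef_diagonal_iff.mp hDFneg i
    linarith
  have hDGpos : (diagonal e).PosSemidef := by
    have h2 : Sᵀ * G * (Sᵀ)ᴴ = diagonal e := by rw [hSH, hGe, hDGe, conj]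
    rw [← h2]
    exact hGpos.mul_mul_conjTranspose_same _
  have hele : ∀ i, 0 ≤ e i := Matrix.posSemidef_diagonal_iff.mp hDGpos
  have hFinv : F⁻¹ = S * diagonal (fun i => (d i)⁻¹) * Sᵀ := by
    apply Matrix.inv_eq_right_inv
    rw [hFe, hDFd]
    have h3 : (fun i => d i * (d i)⁻¹) = fun _ => (1 : ℝ) := by
      funext i; exact mul_inv_cancel₀ (hdne i)
    calc S * diagonal d * Sᵀ * (S * diagonal (fun i => (d i)⁻¹) * Sᵀ)
        = S * (diagonal d * ((Sᵀ * S) * (diagonal (fun i => (d i)⁻¹) * Sᵀ))) := by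
          simp only [Matrix.mul_assoc]
      _ = S * ((diagonal d * diagonal fun i => (d i)⁻¹) * Sᵀ) := by
          rw [hS', Matrix.one_mul, Matrix.mul_assoc]
      _ = 1 := by
          rw [Matrix.diagonal_mul_diagonal, h3, Matrix.diagonal_one, Matrix.one_mul,
            hS]
  have key : -(F⁻¹ * G) = S * diagonal (fun i => -((d i)⁻¹ * e i)) * Sᴴ := by
    rw [Matrix.conjTranspose_eq_transpose_of_trivial, hFinv, hGe, hDGe,
      ← Matrix.diagonal_neg]
    calc -(S * diagonal (fun i => (d i)⁻¹) * Sᵀ * (S * diagonal e * Sᵀ))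
        = -(S * (diagonal (fun i => (d i)⁻¹) * ((Sᵀ * S) * (diagonal e * Sᵀ)))) := by
          simp only [Matrix.mul_assoc]
      _ = -(S * ((diagonal (fun i => (d i)⁻¹) * diagonal e) * Sᵀ)) := by
          rw [hS', Matrix.one_mul, Matrix.mul_assoc]
      _ = S * -(diagonal fun i => (d i)⁻¹ * e i) * Sᵀ := by
          rw [Matrix.diagonal_mul_diagonal]
          simp only [Matrix.mul_neg, Matrix.neg_mul, Matrix.mul_assoc]
  rw [key]
  apply Matrix.PosSemidef.mul_mul_conjTranspose_same
  refine Matrix.posSemidef_diagonal_iff.mpr fun i => ?_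
  have h1 : (d i)⁻¹ ≤ 0 := inv_nonpos.mpr (hdle i)
  nlinarith [hele i]
end

section
/- Let (F, G) be an eigencomplementary pair of symmetric matrices F, G ∈ ℝ^{L×L}. If G is invertible, then the matrix F G⁻¹ is negative semidefinite. -/
open Matrix

theorem stmt1 {L : ℕ} (F G : Matrix (Fin L) (Fin L) ℝ)
    (h : Eigencomplementary F G) (hG : IsUnit G) :
    (-(F * G⁻¹)).PosSemidef := by
  obtain ⟨hFsym, hGsym, hFn, hGp, ⟨S, DF, DG, hS, hDF, hDG, hFe, hGe⟩, -⟩ := h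

  have hS' : Sᵀ * S = 1 := mul_eq_one_comm.mp hS
  set df := DF.diag with hdf
  set dg := DG.diag with hdg
  have hDFd : diagonal df = DF := hDF.diagonal_diag
  have hDGd : diagonal dg = DG := hDG.diagonal_diag
  have hSH : Sᴴ = Sᵀ := by ext i j; simp [conjTranspose_apply]
  -- -DF and DG are PSD
  have hDFp : (-DF).PosSemidef := by
    have : (Sᵀ * (-F) * S).PosSemidef := by
      have := hFn.mul_mul_conjTranspose_same Sᵀ
      simpa [hSH, transpose_transpose] using this
    have e : Sᵀ * (-F) * S = -DF := by
      rw [hFe]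
      simp only [Matrix.neg_mul, Matrix.mul_neg, neg_inj]
      calc Sᵀ * (S * DF * Sᵀ) * S = (Sᵀ * S) * DF * (Sᵀ * S) := by
            simp only [Matrix.mul_assoc]
        _ = DF := by rw [hS']; simp
    rwa [e] at this
  have hDGp : DG.PosSemidef := by
    have : (Sᵀ * G * S).PosSemidef := by
      have := hGp.mul_mul_conjTranspose_same Sᵀ
      simpa [hSH, transpose_transpose] using this
    have e : Sᵀ * G * S = DG := by
      rw [hGe]
      calc Sᵀ * (S * DG * Sᵀ) * S = (Sᵀ * S) * DG * (Sᵀ * S) := by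
            simp only [Matrix.mul_assoc]
        _ = DG := by rw [hS']; simp
    rwa [e] at this
  have hdfn : ∀ i, df i ≤ 0 := by
    intro i
    have : (diagonal (fun i => -df i)).PosSemidef := by
      have : diagonal (fun i => -df i) = -DF := by
        rw [← hDFd]; ext j k; by_cases hjk : j = k <;> simp [diagonal, hjk]
      rw [this]; exact hDFp
    have := posSemidef_diagonal_iff.mp this i
    linarith
  have hdgn : ∀ i, 0 ≤ dg i := by
    intro i
    have := posSemidef_diagonal_iff.mp (hDGd ▸ hDGp) i
    simpa using this
  -- dg i ≠ 0
  have hdet : G.det ≠ 0 := by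
    intro h0
    rw [isUnit_iff_isUnit_det, h0] at hG
    exact (by simp at hG)
  have hdg0 : ∀ i, dg i ≠ 0 := by
    intro i hi
    apply hdet
    rw [hGe, ← hDGd, Matrix.det_mul, Matrix.det_mul, Matrix.det_diagonal,
      Finset.prod_eq_zero (Finset.mem_univ i) hi]
    ring
  -- G⁻¹
  have hGinv : G⁻¹ = S * diagonal (fun i => (dg i)⁻¹) * Sᵀ := by
    apply inv_eq_right_inv
    rw [hGe, ← hDGd]
    calc S * diagonal dg * Sᵀ * (S * diagonal (fun i => (dg i)⁻¹) * Sᵀ)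
        = S * (diagonal dg * (Sᵀ * S) * diagonal (fun i => (dg i)⁻¹)) * Sᵀ := by
          simp only [Matrix.mul_assoc]
      _ = S * (diagonal dg * diagonal (fun i => (dg i)⁻¹)) * Sᵀ := by rw [hS']; simp [Matrix.mul_assoc]
      _ = 1 := by
          rw [diagonal_mul_diagonal]
          have : (fun i => dg i * (dg i)⁻¹) = fun _ => (1:ℝ) := by
            funext i; exact mul_inv_cancel₀ (hdg0 i)
          rw [this, diagonal_one]
          simp [hS]
  have key : -(F * G⁻¹) = S * diagonal (fun i => -(df i) * (dg i)⁻¹) * Sᵀ := by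
    rw [hGinv, hFe, ← hDFd]
    calc -(S * diagonal df * Sᵀ * (S * diagonal (fun i => (dg i)⁻¹) * Sᵀ))
        = -(S * (diagonal df * (Sᵀ * S) * diagonal (fun i => (dg i)⁻¹)) * Sᵀ) := by
          simp only [Matrix.mul_assoc]
      _ = -(S * (diagonal df * diagonal (fun i => (dg i)⁻¹)) * Sᵀ) := by
          rw [hS']; simp [Matrix.mul_assoc]
      _ = S * diagonal (fun i => -(df i) * (dg i)⁻¹) * Sᵀ := by
          rw [diagonal_mul_diagonal, ← Matrix.neg_mul, ← Matrix.mul_neg, diagonal_neg]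
          have heq : (fun i => -(df i * (dg i)⁻¹)) = fun i => -(df i) * (dg i)⁻¹ := by
            funext i; ring
          rw [heq]
  rw [key]
  have hdiag : (diagonal (fun i => -(df i) * (dg i)⁻¹)).PosSemidef := by
    refine posSemidef_diagonal_iff.mpr fun i => ?_
    have h1 : 0 ≤ -df i := by linarith [hdfn i]
    have h2 : 0 ≤ (dg i)⁻¹ := inv_nonneg.mpr (hdgn i)
    exact mul_nonneg h1 h2
  have := hdiag.mul_mul_conjTranspose_same S
  simpa [hSH] using this
end

section
/- Let (F, G) be an eigencomplementary pair of symmetric matrices F, G ∈ ℝ^{L×L} such that both F and G are singular. If G u = F w for two vectors u, w ∈ ℝ^L, then uᵀ w = 0. -/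
open Matrix

lemma diag_mulVec_single {L : ℕ} {D : Matrix (Fin L) (Fin L) ℝ} (hD : D.IsDiag) (i : Fin L) :
    D *ᵥ (Pi.single i 1 : Fin L → ℝ) = D i i • (Pi.single i 1 : Fin L → ℝ) := by
  funext j
  rcases eq_or_ne j i with rfl | hj
  · simp [mulVec_single]
  · simp [mulVec_single, hD hj, Pi.single_eq_of_ne hj]

lemma mem_Eig_iff {L : ℕ} {M : Matrix (Fin L) (Fin L) ℝ} {ξ : ℝ} {x : Fin L → ℝ} :
    x ∈ Eig M ξ ↔ M *ᵥ x = ξ • x := by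
  rw [Eig, Module.End.mem_eigenspace_iff, Matrix.toLin'_apply]

theorem stmt2 {L : ℕ} (F G : Matrix (Fin L) (Fin L) ℝ)
    (h : Eigencomplementary F G) (hF : ¬ IsUnit F) (hG : ¬ IsUnit G)
    (u w : Fin L → ℝ) (huw : G *ᵥ u = F *ᵥ w) :
    u ⬝ᵥ w = 0 := by
  obtain ⟨hFs, hGs, hFn, hGp, ⟨S, DF, DG, hS, hDF, hDG, hFeq, hGeq⟩, hcomp⟩ := h
  have hS' : Sᵀ * S = 1 := mul_eq_one_comm.mp hS
  have hEig := hcomp hF hG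
  let c : Fin L → (Fin L → ℝ) := fun i => S *ᵥ Pi.single i 1
  have hFc : ∀ i, F *ᵥ c i = DF i i • c i := by
    intro i
    show F *ᵥ (S *ᵥ Pi.single i 1) = DF i i • (S *ᵥ Pi.single i 1)
    rw [hFeq, mulVec_mulVec, mul_assoc (S * DF), hS', mul_one, ← mulVec_mulVec,
        diag_mulVec_single hDF, mulVec_smul]
  have hGc : ∀ i, G *ᵥ c i = DG i i • c i := by
    intro i
    show G *ᵥ (S *ᵥ Pi.single i 1) = DG i i • (S *ᵥ Pi.single i 1)
    rw [hGeq, mulVec_mulVec, mul_assoc (S * DG), hS', mul_one, ← mulVec_mulVec,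
        diag_mulVec_single hDG, mulVec_smul]
  have hcc : ∀ i, c i ⬝ᵥ c i = 1 := by
    intro i
    show (S *ᵥ Pi.single i 1) ⬝ᵥ (S *ᵥ Pi.single i 1) = 1
    rw [dotProduct_mulVec, vecMul_mulVec, hS', vecMul_one]
    simp
  have hcne : ∀ i, c i ≠ 0 := by
    intro i hne
    have := hcc i
    rw [hne] at this
    simp at this
  have hDFle : ∀ i, DF i i ≤ 0 := by
    intro i
    have h2 := hFn.dotProduct_mulVec_nonneg (c i)
    rw [neg_mulVec, dotProduct_neg, hFc i, dotProduct_smul, star_trivial, hcc i] at h2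
    simpa using h2
  have hkey : ∀ i, DG i i = 0 ↔ DF i i < 0 := by
    intro i
    constructor
    · intro h0
      rcases lt_or_eq_of_le (hDFle i) with hlt | heqz
      · exact hlt
      · exfalso
        have hci0 : c i ∈ Eig G 0 := by
          rw [mem_Eig_iff, hGc i, h0]
        rw [← hEig] at hci0
        have hciF : c i ∈ Module.End.eigenspace (Matrix.toLin' F) 0 := by
          have : c i ∈ Eig F 0 := by rw [mem_Eig_iff, hFc i, heqz]
          exact this
        have hdisj : Disjoint (Module.End.eigenspace (Matrix.toLin' F) 0)
            (⨆ ξ : {x : ℝ // x < 0}, Eig F ξ.1) := by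
          have hind := (Module.End.eigenspaces_iSupIndep (Matrix.toLin' F)).disjoint_biSup
            (x := (0 : ℝ)) (y := {x : ℝ | x < 0}) (by simp)
          refine hind.mono_right ?_
          exact iSup_le fun ξ => le_iSup₂_of_le ξ.1 ξ.2 le_rfl
        have hb := hdisj.le_bot ⟨hciF, hci0⟩
        exact hcne i (by simpa using hb)
    · intro hlt
      have hmem : c i ∈ Eig F (DF i i) := by rw [mem_Eig_iff, hFc i]
      have hmem2 : c i ∈ Eig G 0 := by
        rw [← hEig]
        exact le_iSup (fun ξ : {x : ℝ // x < 0} => Eig F ξ.1) ⟨DF i i, hlt⟩ hmem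
      rw [mem_Eig_iff, hGc i, zero_smul] at hmem2
      rcases smul_eq_zero.mp hmem2 with h0 | h0
      · exact h0
      · exact absurd h0 (hcne i)
  set uu : Fin L → ℝ := Sᵀ *ᵥ u with huu
  set ww : Fin L → ℝ := Sᵀ *ᵥ w with hww
  have heq : DG *ᵥ uu = DF *ᵥ ww := by
    rw [huu, hww, mulVec_mulVec, mulVec_mulVec]
    have h1 : DG * Sᵀ = Sᵀ * G := by
      rw [hGeq, ← mul_assoc, ← mul_assoc, hS', one_mul]
    have h2 : DF * Sᵀ = Sᵀ * F := by
      rw [hFeq, ← mul_assoc, ← mul_assoc, hS', one_mul]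
    rw [h1, h2, ← mulVec_mulVec, ← mulVec_mulVec, huw]
  have hcomp' : ∀ i, DG i i * uu i = DF i i * ww i := by
    intro i
    have hfun := congrFun heq i
    have hl : (DG *ᵥ uu) i = DG i i * uu i := by
      rw [mulVec, dotProduct, Finset.sum_eq_single i]
      · intro b _ hb
        rw [hDG (Ne.symm hb), zero_mul]
      · simp
    have hr : (DF *ᵥ ww) i = DF i i * ww i := by
      rw [mulVec, dotProduct, Finset.sum_eq_single i]
      · intro b _ hb
        rw [hDF (Ne.symm hb), zero_mul]
      · simp
    rw [hl, hr] at hfun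
    exact hfun
  have hterm : ∀ i, uu i * ww i = 0 := by
    intro i
    rcases lt_or_eq_of_le (hDFle i) with hlt | heqz
    · have h0 : DG i i = 0 := (hkey i).mpr hlt
      have hx := hcomp' i
      rw [h0, zero_mul] at hx
      have hw0 : ww i = 0 := by
        rcases mul_eq_zero.mp hx.symm with h' | h'
        · exact absurd h' (ne_of_lt hlt)
        · exact h'
      rw [hw0, mul_zero]
    · have hne : DG i i ≠ 0 := by
        intro h0
        exact absurd ((hkey i).mp h0) (by rw [heqz]; exact lt_irrefl 0)
      have hx := hcomp' i
      rw [heqz, zero_mul] at hx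
      have hu0 : uu i = 0 := by
        rcases mul_eq_zero.mp hx with h' | h'
        · exact absurd h' hne
        · exact h'
      rw [hu0, zero_mul]
  have hfinal : uu ⬝ᵥ ww = u ⬝ᵥ w := by
    rw [huu, hww, dotProduct_mulVec, vecMul_mulVec, transpose_transpose, hS, vecMul_one]
  rw [← hfinal, dotProduct]
  exact Finset.sum_eq_zero fun i _ => hterm i
end

section
/- Let (F, G) be an eigencomplementary pair of symmetric matrices F, G ∈ ℝ^{L×L}. If G u = F w for two vectors u, w ∈ ℝ^L, then uᵀ w ≤ 0. (If one of F, G is invertible this follows from negative semidefiniteness of F⁻¹G or F G⁻¹; if both are singular, then uᵀ w = 0.) -/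
open Matrix

theorem stmt3 {L : ℕ} (F G : Matrix (Fin L) (Fin L) ℝ)
    (h : Eigencomplementary F G)
    (u w : Fin L → ℝ) (huw : G *ᵥ u = F *ᵥ w) :
    u ⬝ᵥ w ≤ 0 := by
  obtain ⟨hFs, hGs, hFneg, hGpos, ⟨S, DF, DG, hS, hDF, hDG, hF, hG⟩, hcomp⟩ := h
  have hS' : Sᵀ * S = 1 := mul_eq_one_comm.mp hS
  set f : Fin L → ℝ := DF.diag with hf
  set g : Fin L → ℝ := DG.diag with hg
  have hDFd : DF = Matrix.diagonal f := hDF.diagonal_diag.symm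
  have hDGd : DG = Matrix.diagonal g := hDG.diagonal_diag.symm
  -- quadratic form computation
  have quad : ∀ (M : Matrix (Fin L) (Fin L) ℝ) (v : Fin L → ℝ),
      (S *ᵥ v) ⬝ᵥ ((S * M * Sᵀ) *ᵥ (S *ᵥ v)) = v ⬝ᵥ (M *ᵥ v) := by
    intro M v
    rw [mulVec_mulVec, show S * M * Sᵀ * S = S * M by rw [mul_assoc, hS', mul_one],
      ← mulVec_mulVec, dotProduct_mulVec (S *ᵥ v) S, ← mulVec_transpose,
      mulVec_mulVec, hS', one_mulVec]
  have hfle : ∀ i, f i ≤ 0 := by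
    intro i
    have h0 := hFneg.dotProduct_mulVec_nonneg (S *ᵥ Pi.single i 1)
    rw [show -F = S * (-DF) * Sᵀ by rw [hF]; noncomm_ring, star_trivial,
      quad (-DF) (Pi.single i 1), hDFd] at h0
    have : Pi.single i 1 ⬝ᵥ ((-(Matrix.diagonal f)) *ᵥ Pi.single i 1) = -(f i) := by
      rw [show -(Matrix.diagonal f) = Matrix.diagonal (-f) by simp,
        diagonal_mulVec_single]
      simp
    rw [this] at h0
    linarith
  have hgge : ∀ i, 0 ≤ g i := by
    intro i
    have h0 := hGpos.dotProduct_mulVec_nonneg (S *ᵥ Pi.single i 1)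
    rw [hG, star_trivial, quad DG (Pi.single i 1), hDGd, diagonal_mulVec_single] at h0
    simpa using h0
  set x : Fin L → ℝ := Sᵀ *ᵥ u with hx
  set y : Fin L → ℝ := Sᵀ *ᵥ w with hy
  -- coordinatewise equation
  have hxy : ∀ i, g i * x i = f i * y i := by
    have h1 : DG *ᵥ x = DF *ᵥ y := by
      have h2 := congrArg (fun z => Sᵀ *ᵥ z) huw
      simp only [hF, hG, mulVec_mulVec, ← mul_assoc, hS', one_mul] at h2
      rw [hx, hy, mulVec_mulVec, mulVec_mulVec]
      exact h2
    intro i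
    have := congrFun h1 i
    rwa [hDFd, hDGd, mulVec_diagonal, mulVec_diagonal] at this
  -- dot product identity
  have hdot : u ⬝ᵥ w = x ⬝ᵥ y := by
    rw [hx, hy, dotProduct_mulVec (Sᵀ *ᵥ u) Sᵀ w, ← mulVec_transpose, transpose_transpose,
      mulVec_mulVec, hS, one_mulVec]
  -- no index with both eigenvalues zero
  have key : ∀ i, ¬ (f i = 0 ∧ g i = 0) := by
    rintro i ⟨hfi, hgi⟩
    have hdetF : F.det = 0 := by
      rw [hF, det_mul, det_mul, hDFd, det_diagonal,
        Finset.prod_eq_zero (Finset.mem_univ i) hfi]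
      ring
    have hdetG : G.det = 0 := by
      rw [hG, det_mul, det_mul, hDGd, det_diagonal,
        Finset.prod_eq_zero (Finset.mem_univ i) hgi]
      ring
    have hFu : ¬ IsUnit F := by
      rw [Matrix.isUnit_iff_isUnit_det, isUnit_iff_ne_zero, hdetF]; simp
    have hGu : ¬ IsUnit G := by
      rw [Matrix.isUnit_iff_isUnit_det, isUnit_iff_ne_zero, hdetG]; simp
    have hEq := hcomp hFu hGu
    set v : Fin L → ℝ := S *ᵥ Pi.single i 1 with hv
    have hcol : ∀ (M : Matrix (Fin L) (Fin L) ℝ), (S * M * Sᵀ) *ᵥ v = S *ᵥ (M *ᵥ Pi.single i 1) := by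
      intro M
      rw [hv, mulVec_mulVec, show S * M * Sᵀ * S = S * M by rw [mul_assoc, hS', mul_one],
        ← mulVec_mulVec]
    have hFv : F *ᵥ v = 0 := by
      rw [hF, hcol, hDFd, diagonal_mulVec_single, hfi]
      simp
    have hGv : G *ᵥ v = 0 := by
      rw [hG, hcol, hDGd, diagonal_mulVec_single, hgi]
      simp
    have hvG : v ∈ Eig G 0 := by
      rw [Eig, Module.End.mem_eigenspace_iff, Matrix.toLin'_apply, hGv]
      simp
    have hvF : v ∈ Eig F 0 := by
      rw [Eig, Module.End.mem_eigenspace_iff, Matrix.toLin'_apply, hFv]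
      simp
    have hvsup : v ∈ ⨆ ξ : {x : ℝ // x < 0}, Eig F ξ.1 := hEq ▸ hvG
    have hle : (⨆ ξ : {x : ℝ // x < 0}, Eig F ξ.1) ≤
        ⨆ (ξ : ℝ) (_ : ξ ≠ (0:ℝ)), Eig F ξ :=
      iSup_le fun ξ => le_iSup₂ (f := fun (ξ : ℝ) (_ : ξ ≠ (0:ℝ)) => Eig F ξ) ξ.1 (ne_of_lt ξ.2)
    have hdisj := Module.End.eigenspaces_iSupIndep (Matrix.toLin' F) (0 : ℝ)
    have hv0 : v = 0 := Submodule.disjoint_def.mp hdisj v hvF (hle hvsup)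
    have h3 : Sᵀ *ᵥ v = Pi.single i 1 := by
      rw [hv, mulVec_mulVec, hS', one_mulVec]
    rw [hv0, mulVec_zero] at h3
    have := congrFun h3 i
    simp at this
  -- conclude
  rw [hdot, dotProduct]
  apply Finset.sum_nonpos
  intro i _
  rcases lt_or_eq_of_le (hfle i) with hfi | hfi
  · have h1 : f i * (x i * y i) = g i * (x i * x i) := by
      linear_combination (-(x i)) * (hxy i)
    have h2 : 0 ≤ g i * (x i * x i) := mul_nonneg (hgge i) (mul_self_nonneg _)
    nlinarith
  · have hgi : g i ≠ 0 := fun hgi => key i ⟨hfi, hgi⟩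
    have : g i * x i = 0 := by rw [hxy i, ← hfi.symm, zero_mul]
    have hxi : x i = 0 := by
      rcases mul_eq_zero.mp this with h | h
      · exact absurd h hgi
      · exact h
    rw [hxi]
    simp
end

section
/- Suppose the pair (X_i, Y_i) is eigencomplementary for every i = 1,…,N. Then the Schur complement S_H := Y − X S_E⁻¹ D is a regular (invertible) matrix. -/
open Matrix

section Aux

variable {n : Type*} [Fintype n] [DecidableEq n]

/-- A positive semidefinite real matrix that is a unit is positive definite. -/
lemma aux_posDef_of_psd_isUnit {M : Matrix n n ℝ} (h : M.PosSemidef) (hu : IsUnit M) :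
    M.PosDef := by
  refine posDef_iff_dotProduct_mulVec.mpr ⟨h.1, fun x hx => lt_of_le_of_ne (h.dotProduct_mulVec_nonneg x) fun h0 => hx ?_⟩
  have h1 : M *ᵥ x = 0 := (h.dotProduct_mulVec_zero_iff x).1 h0.symm
  have hinj := Matrix.mulVec_injective_iff_isUnit.mpr hu
  exact hinj (by simpa using h1 : M *ᵥ x = M *ᵥ 0)

lemma aux_psd_diag_nonneg {M : Matrix n n ℝ} (h : M.PosSemidef) (j : n) : 0 ≤ M j j := by
  have := h.dotProduct_mulVec_nonneg (Pi.single j 1)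
  simpa [Matrix.mulVec_single, dotProduct, Pi.single_apply] using this

lemma aux_diag_mulVec {M : Matrix n n ℝ} (h : M.IsDiag) (v : n → ℝ) (j : n) :
    (M *ᵥ v) j = M j j * v j := by
  simp only [Matrix.mulVec, dotProduct]
  exact Finset.sum_eq_single j (fun k _ hk => by rw [h (Ne.symm hk), zero_mul]) (by simp)

lemma aux_conj_back {S D : Matrix n n ℝ} (hS : S * Sᵀ = 1) :
    Sᵀ * (S * D * Sᵀ) * S = D := by
  have hST : Sᵀ * S = 1 := mul_eq_one_comm.mp hS
  calc Sᵀ * (S * D * Sᵀ) * S = (Sᵀ * S) * (D * (Sᵀ * S)) := by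
        simp only [Matrix.mul_assoc]
    _ = D := by rw [hST, Matrix.mul_one, Matrix.one_mul]

/-- The core invertibility lemma. -/
lemma aux_core {T : Matrix n n ℝ} (hT : T.PosDef) (dx dy dd : n → ℝ)
    (hdx : ∀ p, dx p ≤ 0) (hdy : ∀ p, 0 ≤ dy p) (hdd : ∀ p, 0 < dd p)
    (hne : ∀ p, dx p ≠ 0 ∨ dy p ≠ 0) :
    IsUnit (Matrix.diagonal dy - Matrix.diagonal dx * T * Matrix.diagonal dd) := by
  rw [Matrix.isUnit_iff_isUnit_det, isUnit_iff_ne_zero]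
  intro hdet
  obtain ⟨v, hv0, hv⟩ := Matrix.exists_mulVec_eq_zero_iff.mpr hdet
  set u : n → ℝ := fun p => dd p * v p with hu
  set w : n → ℝ := T *ᵥ u with hw
  have hddv : Matrix.diagonal dd *ᵥ v = u := by
    funext q
    rw [Matrix.mulVec_diagonal]
  have hcomp : ∀ p, dy p * v p = dx p * w p := by
    intro p
    have h1 : (Matrix.diagonal dy *ᵥ v) p - ((Matrix.diagonal dx * T * Matrix.diagonal dd) *ᵥ v) p = 0 := by
      have := congrFun hv p
      simpa [Matrix.sub_mulVec] using this
    have h3 : ((Matrix.diagonal dx * T * Matrix.diagonal dd) *ᵥ v) p = dx p * w p := by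
      rw [← Matrix.mulVec_mulVec, ← Matrix.mulVec_mulVec, hddv, ← hw, Matrix.mulVec_diagonal]
    rw [h3, Matrix.mulVec_diagonal] at h1
    linarith
  have key : ∀ p, u p * w p ≤ 0 := by
    intro p
    rcases (hdx p).lt_or_eq with hneg | h0
    · have h1 : dx p * (u p * w p) = dd p * (dy p * (v p * v p)) := by
        have h2 : dx p * w p = dy p * v p := (hcomp p).symm
        calc dx p * (u p * w p) = (dd p * v p) * (dx p * w p) := by rw [hu]; ring
          _ = (dd p * v p) * (dy p * v p) := by rw [h2]
          _ = dd p * (dy p * (v p * v p)) := by ring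
      have h2 : 0 ≤ dx p * (u p * w p) := by
        rw [h1]
        exact mul_nonneg (hdd p).le (mul_nonneg (hdy p) (mul_self_nonneg _))
      nlinarith [h2, hneg]
    · have hdyp : 0 < dy p := by
        rcases (hne p) with h | h
        · exact absurd h0 h
        · exact (hdy p).lt_of_ne' h
      have hvp : v p = 0 := by
        have h5 := hcomp p
        rw [h0, zero_mul] at h5
        exact (mul_eq_zero.mp h5).resolve_left hdyp.ne'
      simp [hu, hvp]
  have hu0 : u ≠ 0 := by
    intro h
    apply hv0
    funext p
    have := congrFun h p
    simp only [hu, Pi.zero_apply] at this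
    exact (mul_eq_zero.mp this).resolve_left (hdd p).ne'
  have hpos : 0 < u ⬝ᵥ w := by
    have := (posDef_iff_dotProduct_mulVec.mp hT).2 hu0
    simpa [hw] using this
  have hnonpos : u ⬝ᵥ w ≤ 0 := Finset.sum_nonpos fun p _ => key p
  linarith

/-- blockDiagonal of diagonal blocks is diagonal. -/
lemma aux_blockDiagonal_diagonal {L N : ℕ} (Dm : Fin N → Matrix (Fin L) (Fin L) ℝ)
    (h : ∀ i, (Dm i).IsDiag) :
    Matrix.blockDiagonal Dm = Matrix.diagonal (fun p : Fin L × Fin N => Dm p.2 p.1 p.1) := by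
  ext ⟨a, i⟩ ⟨b, k⟩
  rw [Matrix.blockDiagonal_apply, Matrix.diagonal_apply]
  by_cases hik : i = k
  · subst hik
    by_cases hab : a = b
    · subst hab; simp
    · rw [if_pos rfl, if_neg (by simp [Prod.ext_iff, hab]), h i hab]
  · rw [if_neg hik, if_neg (by simp [Prod.ext_iff, hik])]

end Aux

/-- Neither `DF j j` and `DG j j` can both vanish for an eigencomplementary pair. -/
lemma aux_not_both_zero {L : ℕ} {F G S DF DG : Matrix (Fin L) (Fin L) ℝ}
    (hS : S * Sᵀ = 1) (hDF : DF.IsDiag) (hDG : DG.IsDiag)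
    (hF : F = S * DF * Sᵀ) (hG : G = S * DG * Sᵀ)
    (hcond : ¬ IsUnit F → ¬ IsUnit G →
      (⨆ ξ : {x : ℝ // x < 0}, Eig F ξ.1) = Eig G 0)
    (j : Fin L) : DF j j ≠ 0 ∨ DG j j ≠ 0 := by
  by_contra hcon
  push_neg at hcon
  obtain ⟨hf0, hg0⟩ := hcon
  have hST : Sᵀ * S = 1 := mul_eq_one_comm.mp hS
  set e : Fin L → ℝ := Pi.single j 1 with he
  set s : Fin L → ℝ := S *ᵥ e with hs
  have hse : Sᵀ *ᵥ s = e := by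
    rw [hs, Matrix.mulVec_mulVec, hST, Matrix.one_mulVec]
  have hs0 : s ≠ 0 := by
    intro h
    rw [h, Matrix.mulVec_zero] at hse
    have := congrFun hse j
    simp [he] at this
  have hmv : ∀ (D : Matrix (Fin L) (Fin L) ℝ), D.IsDiag → D j j = 0 →
      (S * D * Sᵀ) *ᵥ s = 0 := by
    intro D hD h0
    rw [hs, Matrix.mulVec_mulVec]
    have : S * D * Sᵀ * S = S * D := by
      rw [Matrix.mul_assoc, Matrix.mul_assoc, hST, Matrix.mul_one]
    rw [this, ← Matrix.mulVec_mulVec]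
    have hDe : D *ᵥ e = 0 := by
      funext k
      rw [aux_diag_mulVec hD]
      by_cases hk : k = j
      · subst hk; rw [h0, zero_mul]; rfl
      · simp [he, Pi.single_apply, hk]
    rw [hDe, Matrix.mulVec_zero]
  have hFs : F *ᵥ s = 0 := by rw [hF]; exact hmv DF hDF hf0
  have hGs : G *ᵥ s = 0 := by rw [hG]; exact hmv DG hDG hg0
  have hFnu : ¬ IsUnit F := by
    intro h
    exact hs0 (Matrix.mulVec_injective_iff_isUnit.mpr h (by simpa using hFs : F *ᵥ s = F *ᵥ 0))
  have hGnu : ¬ IsUnit G := by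
    intro h
    exact hs0 (Matrix.mulVec_injective_iff_isUnit.mpr h (by simpa using hGs : G *ᵥ s = G *ᵥ 0))
  have hc := hcond hFnu hGnu
  have hsG : s ∈ Eig G 0 := by
    rw [Eig, Module.End.mem_eigenspace_iff, Matrix.toLin'_apply, hGs, zero_smul]
  have hsF0 : s ∈ Module.End.eigenspace (Matrix.toLin' F) (0 : ℝ) := by
    rw [Module.End.mem_eigenspace_iff, Matrix.toLin'_apply, hFs, zero_smul]
  rw [← hc] at hsG
  have hdisj := (Module.End.eigenspaces_iSupIndep (Matrix.toLin' F)) 0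
  have hle : (⨆ ξ : {x : ℝ // x < 0}, Eig F ξ.1)
      ≤ ⨆ (ν : ℝ) (_ : ν ≠ 0), Module.End.eigenspace (Matrix.toLin' F) ν :=
    iSup_le fun ξ => le_iSup₂_of_le ξ.1 ξ.2.ne (le_refl _)
  exact hs0 (Submodule.disjoint_def.mp hdisj s hsF0 (hle hsG))

/-- If each pair `(Xᵢ, Yᵢ)` is eigencomplementary, then the Schur complement
`S_H = Y - X S_E⁻¹ D` (with `S_E = C - Bᵀ A⁻¹ B`) is invertible. -/
theorem stmt4 {d L M N : ℕ} (hd : 0 < d) (hL : 0 < L) (hM : 0 < M) (hN : 0 < N)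
    (A : Matrix (Fin (d * M)) (Fin (d * M)) ℝ)
    (B : Matrix (Fin (d * M)) (Fin L × Fin N) ℝ)
    (C : Matrix (Fin L × Fin N) (Fin L × Fin N) ℝ)
    (Di : Fin N → ℝ) (hDi : ∀ i, 0 < Di i)
    (Xb Yb : Fin N → Matrix (Fin L) (Fin L) ℝ)
    (hA : A.PosDef) (hC : C.PosDef)
    (hE : (Matrix.fromBlocks A B Bᵀ C).PosDef)
    (hXY : ∀ i, Eigencomplementary (Xb i) (Yb i)) :
    IsUnit (Matrix.blockDiagonal Yb -
      Matrix.blockDiagonal Xb * (C - Bᵀ * A⁻¹ * B)⁻¹ *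
        Matrix.blockDiagonal fun i => Di i • (1 : Matrix (Fin L) (Fin L) ℝ)) := by
  classical
  -- extract simultaneous diagonalizations
  have hsim := fun i => (hXY i).2.2.2.2.1
  choose S DF DG hS hDF hDG hF hG using hsim
  -- the Schur complement S_E is positive definite
  haveI : Invertible A := hA.isUnit.invertible
  set SE : Matrix (Fin L × Fin N) (Fin L × Fin N) ℝ := C - Bᵀ * A⁻¹ * B with hSE
  have hBt : Bᴴ = Bᵀ := Matrix.conjTranspose_eq_transpose_of_trivial B
  have hSE_psd : SE.PosSemidef := by
    have hE' : (Matrix.fromBlocks A B Bᴴ C).PosSemidef := by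
      rw [hBt]; exact hE.posSemidef
    have h1 := (Matrix.PosDef.fromBlocks₁₁ B C hA).mp hE'
    rwa [hBt] at h1
  have hSE_unit : IsUnit SE := by
    have hdetE := hE.det_pos.ne'
    rw [Matrix.det_fromBlocks₁₁, invOf_eq_nonsing_inv] at hdetE
    rw [Matrix.isUnit_iff_isUnit_det, isUnit_iff_ne_zero]
    intro h
    apply hdetE
    rw [← hSE, h, mul_zero]
  have hSE_pd : SE.PosDef := aux_posDef_of_psd_isUnit hSE_psd hSE_unit
  -- the orthogonal block-diagonal matrix
  set Sb : Matrix (Fin L × Fin N) (Fin L × Fin N) ℝ := Matrix.blockDiagonal S with hSb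
  have hSbT : Sbᵀ = Matrix.blockDiagonal (fun i => (S i)ᵀ) := Matrix.blockDiagonal_transpose S
  have hSbO : Sb * Sbᵀ = 1 := by
    rw [hSb, hSbT, ← Matrix.blockDiagonal_mul, ← Matrix.blockDiagonal_one]
    exact congrArg Matrix.blockDiagonal (funext fun i => hS i)
  have hSbO' : Sbᵀ * Sb = 1 := mul_eq_one_comm.mp hSbO
  have hSbU : IsUnit Sb :=
    letI := invertibleOfRightInverse (h := hSbO)
    isUnit_of_invertible Sb
  have hSbTU : IsUnit Sbᵀ :=
    letI := invertibleOfRightInverse (h := hSbO')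
    isUnit_of_invertible Sbᵀ
  -- T is positive definite
  set T : Matrix (Fin L × Fin N) (Fin L × Fin N) ℝ := Sbᵀ * SE⁻¹ * Sb with hT
  have hT_psd : T.PosSemidef := by
    have h1 := hSE_pd.inv.posSemidef.conjTranspose_mul_mul_same Sb
    rwa [Matrix.conjTranspose_eq_transpose_of_trivial] at h1
  have hT_pd : T.PosDef :=
    aux_posDef_of_psd_isUnit hT_psd ((hSbTU.mul (Matrix.isUnit_nonsing_inv_iff.mpr hSE_unit)).mul hSbU)
  -- diagonal data
  set dx : Fin L × Fin N → ℝ := fun p => DF p.2 p.1 p.1 with hdx_def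
  set dy : Fin L × Fin N → ℝ := fun p => DG p.2 p.1 p.1 with hdy_def
  set dd : Fin L × Fin N → ℝ := fun p => Di p.2 with hdd_def
  have hDFd : Matrix.blockDiagonal DF = Matrix.diagonal dx :=
    aux_blockDiagonal_diagonal DF hDF
  have hDGd : Matrix.blockDiagonal DG = Matrix.diagonal dy :=
    aux_blockDiagonal_diagonal DG hDG
  set Dd : Matrix (Fin L × Fin N) (Fin L × Fin N) ℝ :=
    Matrix.blockDiagonal (fun i => Di i • (1 : Matrix (Fin L) (Fin L) ℝ)) with hDd_def
  have hDdd : Dd = Matrix.diagonal dd := by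
    rw [hDd_def]
    have h1 : ∀ i, (Di i • (1 : Matrix (Fin L) (Fin L) ℝ)).IsDiag := by
      intro i a b hab
      simp [Matrix.smul_apply, Matrix.one_apply_ne hab]
    rw [aux_blockDiagonal_diagonal _ h1]
    congr 1
    funext p
    simp [hdd_def, Matrix.smul_apply]
  -- conjugation identities
  have hXc : Matrix.blockDiagonal Xb = Sb * Matrix.diagonal dx * Sbᵀ := by
    rw [← hDFd, hSb, hSbT, ← Matrix.blockDiagonal_mul, ← Matrix.blockDiagonal_mul]
    exact congrArg Matrix.blockDiagonal (funext fun i => hF i)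
  have hYc : Matrix.blockDiagonal Yb = Sb * Matrix.diagonal dy * Sbᵀ := by
    rw [← hDGd, hSb, hSbT, ← Matrix.blockDiagonal_mul, ← Matrix.blockDiagonal_mul]
    exact congrArg Matrix.blockDiagonal (funext fun i => hG i)
  have hDc : Sb * Dd * Sbᵀ = Dd := by
    rw [hDd_def, hSb, hSbT, ← Matrix.blockDiagonal_mul, ← Matrix.blockDiagonal_mul]
    refine congrArg Matrix.blockDiagonal (funext fun i => ?_)
    calc S i * (Di i • 1) * (S i)ᵀ = Di i • (S i * 1 * (S i)ᵀ) := by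
          rw [Matrix.mul_smul, Matrix.smul_mul]
      _ = Di i • (1 : Matrix (Fin L) (Fin L) ℝ) := by rw [Matrix.mul_one, hS i]
  -- the key congruence identity
  have key : Matrix.blockDiagonal Yb - Matrix.blockDiagonal Xb * SE⁻¹ * Dd
      = Sb * (Matrix.diagonal dy - Matrix.diagonal dx * T * Matrix.diagonal dd) * Sbᵀ := by
    rw [Matrix.mul_sub, Matrix.sub_mul, ← hYc]
    congr 1
    rw [hXc, ← hDdd, hT]
    conv_lhs => rw [← hDc]
    simp only [Matrix.mul_assoc]
  rw [key]
  -- sign conditions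
  have hDFpsd : ∀ i, (-(DF i)).PosSemidef := by
    intro i
    have h1 := (hXY i).2.2.1.conjTranspose_mul_mul_same (S i)
    rw [Matrix.conjTranspose_eq_transpose_of_trivial] at h1
    have h2 : (S i)ᵀ * (-(Xb i)) * S i = -(DF i) := by
      rw [hF i]
      simp only [Matrix.mul_neg, Matrix.neg_mul]
      rw [aux_conj_back (hS i)]
    rwa [h2] at h1
  have hDGpsd : ∀ i, (DG i).PosSemidef := by
    intro i
    have h1 := (hXY i).2.2.2.1.conjTranspose_mul_mul_same (S i)
    rw [Matrix.conjTranspose_eq_transpose_of_trivial] at h1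
    have h2 : (S i)ᵀ * (Yb i) * S i = DG i := by
      rw [hG i, aux_conj_back (hS i)]
    rwa [h2] at h1
  have hdx_le : ∀ p, dx p ≤ 0 := by
    intro p
    have := aux_psd_diag_nonneg (hDFpsd p.2) p.1
    simp only [Matrix.neg_apply] at this
    linarith
  have hdy_ge : ∀ p, 0 ≤ dy p := fun p => aux_psd_diag_nonneg (hDGpsd p.2) p.1
  have hdd_pos : ∀ p, 0 < dd p := fun p => hDi p.2
  have hne : ∀ p, dx p ≠ 0 ∨ dy p ≠ 0 := fun p =>
    aux_not_both_zero (hS p.2) (hDF p.2) (hDG p.2) (hF p.2) (hG p.2)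
      (hXY p.2).2.2.2.2.2 p.1
  exact (hSbU.mul (aux_core hT_pd dx dy dd hdx_le hdy_ge hdd_pos hne)).mul hSbTU
end

section
/- Suppose the pair (X_i, Y_i) is eigencomplementary for every i = 1,…,N. Then the block matrix H = [[A, B, 0],[Bᵀ, C, D],[0, X, Y]] ∈ ℝ^{(dM+2LN)×(dM+2LN)} is regular (invertible). -/
open Matrix

lemma isDiag_mulVec {L : ℕ} {Dm : Matrix (Fin L) (Fin L) ℝ} (h : Dm.IsDiag)
    (x : Fin L → ℝ) (k : Fin L) : (Dm *ᵥ x) k = Dm k k * x k := by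
  simp only [mulVec, dotProduct]
  rw [Finset.sum_eq_single k]
  · intro j _ hj; rw [h (Ne.symm hj), zero_mul]
  · intro hk; exact absurd (Finset.mem_univ k) hk

/-- linear functional x ↦ a ⬝ᵥ x -/
def dotL {L : ℕ} (a : Fin L → ℝ) : (Fin L → ℝ) →ₗ[ℝ] ℝ where
  toFun x := a ⬝ᵥ x
  map_add' x y := dotProduct_add a x y
  map_smul' c x := by simp [dotProduct_smul]

lemma block_key {L : ℕ} {F G : Matrix (Fin L) (Fin L) ℝ}
    (h : Eigencomplementary F G) (v w : Fin L → ℝ)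
    (heq : F *ᵥ v + G *ᵥ w = 0) : 0 ≤ v ⬝ᵥ w := by
  obtain ⟨hF, hG, hFn, hGp, ⟨S, DF, DG, hS, hDF, hDG, hFeq, hGeq⟩, hcomp⟩ := h
  have hS' : Sᵀ * S = 1 := mul_eq_one_comm.mp hS
  set p := Sᵀ *ᵥ v with hp
  set q := Sᵀ *ᵥ w with hq
  have hvw : v ⬝ᵥ w = p ⬝ᵥ q := by
    rw [hp, hq, Matrix.dotProduct_mulVec, Matrix.vecMul_transpose,
      Matrix.mulVec_mulVec, hS, Matrix.one_mulVec]
  -- transformed equation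
  have hcc : ∀ x : Fin L → ℝ, Sᵀ *ᵥ (S *ᵥ x) = x := by
    intro x; rw [Matrix.mulVec_mulVec, hS', Matrix.one_mulVec]
  have heq2 : DF *ᵥ p + DG *ᵥ q = 0 := by
    have h0 : Sᵀ *ᵥ (F *ᵥ v + G *ᵥ w) = 0 := by rw [heq, Matrix.mulVec_zero]
    rw [Matrix.mulVec_add, hFeq, hGeq, ← Matrix.mulVec_mulVec, ← Matrix.mulVec_mulVec,
      ← Matrix.mulVec_mulVec, ← Matrix.mulVec_mulVec, hcc, hcc] at h0
    rw [hp, hq]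
    simpa [Matrix.mulVec_mulVec] using h0
  -- columns of S
  have hcol : ∀ k : Fin L, (S *ᵥ Pi.single k 1) ⬝ᵥ (S *ᵥ Pi.single k 1) = 1 := by
    intro k
    rw [Matrix.dotProduct_mulVec, ← Matrix.mulVec_transpose, hcc]
    simp [dotProduct, Pi.single_apply]
  have hFcol : ∀ k : Fin L, F *ᵥ (S *ᵥ Pi.single k 1) = DF k k • (S *ᵥ Pi.single k 1) := by
    intro k
    rw [hFeq, ← Matrix.mulVec_mulVec, hcc, ← Matrix.mulVec_mulVec]
    have : DF *ᵥ Pi.single k 1 = DF k k • (Pi.single k 1 : Fin L → ℝ) := by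
      funext j
      rw [isDiag_mulVec hDF]
      by_cases hj : j = k
      · subst hj; simp
      · simp [Pi.single_apply, hj]
    rw [this, Matrix.mulVec_smul]
  have hGcol : ∀ k : Fin L, G *ᵥ (S *ᵥ Pi.single k 1) = DG k k • (S *ᵥ Pi.single k 1) := by
    intro k
    rw [hGeq, ← Matrix.mulVec_mulVec, hcc, ← Matrix.mulVec_mulVec]
    have : DG *ᵥ Pi.single k 1 = DG k k • (Pi.single k 1 : Fin L → ℝ) := by
      funext j
      rw [isDiag_mulVec hDG]
      by_cases hj : j = k
      · subst hj; simp
      · simp [Pi.single_apply, hj]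
    rw [this, Matrix.mulVec_smul]
  -- signs of diagonal entries
  have hfle : ∀ k : Fin L, DF k k ≤ 0 := by
    intro k
    have h0 := hFn.dotProduct_mulVec_nonneg (S *ᵥ Pi.single k 1)
    rw [Matrix.neg_mulVec, hFcol k] at h0
    simp only [star_trivial, dotProduct_neg, dotProduct_smul, smul_eq_mul,
      hcol k, mul_one] at h0
    linarith [h0]
  have hgge : ∀ k : Fin L, 0 ≤ DG k k := by
    intro k
    have h0 := hGp.dotProduct_mulVec_nonneg (S *ᵥ Pi.single k 1)
    rw [hGcol k] at h0
    simp only [star_trivial, dotProduct_smul, smul_eq_mul, hcol k, mul_one] at h0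
    exact h0
  -- not both zero
  have hnb : ∀ k : Fin L, ¬ (DF k k = 0 ∧ DG k k = 0) := by
    rintro k ⟨hf0, hg0⟩
    have hskne : (S *ᵥ Pi.single k 1) ≠ 0 := by
      intro h0
      have := hcol k
      rw [h0] at this
      simp at this
    have hFk : F *ᵥ (S *ᵥ Pi.single k 1) = 0 := by rw [hFcol k, hf0, zero_smul]
    have hGk : G *ᵥ (S *ᵥ Pi.single k 1) = 0 := by rw [hGcol k, hg0, zero_smul]
    have hFnu : ¬ IsUnit F := by
      intro hu
      have hdet : F.det ≠ 0 := by
        have := (Matrix.isUnit_iff_isUnit_det F).mp hu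
        exact IsUnit.ne_zero this
      exact hskne (Matrix.eq_zero_of_mulVec_eq_zero hdet hFk)
    have hGnu : ¬ IsUnit G := by
      intro hu
      have hdet : G.det ≠ 0 := by
        have := (Matrix.isUnit_iff_isUnit_det G).mp hu
        exact IsUnit.ne_zero this
      exact hskne (Matrix.eq_zero_of_mulVec_eq_zero hdet hGk)
    have hsup := hcomp hFnu hGnu
    set sk := S *ᵥ Pi.single k 1
    have hmem : sk ∈ Eig G 0 := by
      rw [Eig, Module.End.mem_eigenspace_iff, Matrix.toLin'_apply, hGk, zero_smul]
    rw [← hsup] at hmem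
    have hle : (⨆ ξ : {x : ℝ // x < 0}, Eig F ξ.1) ≤ LinearMap.ker (dotL sk) := by
      apply iSup_le
      rintro ⟨ξ, hξ⟩
      intro x hx
      rw [Eig, Module.End.mem_eigenspace_iff, Matrix.toLin'_apply] at hx
      have h1 : sk ⬝ᵥ (F *ᵥ x) = ξ * (sk ⬝ᵥ x) := by
        rw [hx, dotProduct_smul, smul_eq_mul]
      have h2 : sk ⬝ᵥ (F *ᵥ x) = 0 := by
        rw [Matrix.dotProduct_mulVec, ← Matrix.mulVec_transpose, hF.eq, hFk,
          zero_dotProduct]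
      simp only [LinearMap.mem_ker, dotL, LinearMap.coe_mk, AddHom.coe_mk]
      have := h1.symm.trans h2
      rcases mul_eq_zero.mp this with h | h
      · exact absurd h (ne_of_lt hξ)
      · exact h
    have := hle hmem
    simp only [LinearMap.mem_ker, dotL, LinearMap.coe_mk, AddHom.coe_mk] at this
    rw [hcol k] at this
    exact one_ne_zero this
  -- conclude
  rw [hvw]
  apply Finset.sum_nonneg
  intro k _
  have hk : DF k k * p k + DG k k * q k = 0 := by
    have := congrFun heq2 k
    simpa [isDiag_mulVec hDF, isDiag_mulVec hDG] using this
  rcases lt_or_eq_of_le (hfle k) with hflt | hf0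
  · have h1 : (DF k k * p k + DG k k * q k) * q k = 0 := by rw [hk, zero_mul]
    nlinarith [mul_self_nonneg (q k), hgge k]
  · have hg : DG k k ≠ 0 := by
      intro hg0; exact hnb k ⟨hf0, hg0⟩
    have hq0 : q k = 0 := by
      rw [hf0, zero_mul, zero_add] at hk
      exact (mul_eq_zero.mp hk).resolve_left hg
    rw [hq0, mul_zero]

section helpers
variable {L N : ℕ}

lemma blockDiag_mulVec (K : Fin N → Matrix (Fin L) (Fin L) ℝ) (x : Fin L × Fin N → ℝ)
    (l : Fin L) (i : Fin N) :
    (blockDiagonal K *ᵥ x) (l, i) = (K i *ᵥ fun l' => x (l', i)) l := by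
  simp only [mulVec, dotProduct, Matrix.blockDiagonal_apply, Fintype.sum_prod_type]
  rw [Finset.sum_comm]
  rw [Finset.sum_eq_single i]
  · simp
  · intro j _ hj
    apply Finset.sum_eq_zero
    intro l' _
    rw [if_neg (Ne.symm (Ne.symm hj)).symm]
    · ring
  · intro h; exact absurd (Finset.mem_univ i) h

lemma dot_split (a b : Fin L × Fin N → ℝ) :
    a ⬝ᵥ b = ∑ i : Fin N, (fun l => a (l, i)) ⬝ᵥ (fun l => b (l, i)) := by
  simp only [dotProduct, Fintype.sum_prod_type]
  exact Finset.sum_comm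

end helpers

/-- If each pair `(Xᵢ, Yᵢ)` is eigencomplementary, then the block matrix
`H = [[A, B, 0], [Bᵀ, C, D], [0, X, Y]]` is invertible. -/
theorem stmt5 {d L M N : ℕ} (hd : 0 < d) (hL : 0 < L) (hM : 0 < M) (hN : 0 < N)
    (A : Matrix (Fin (d * M)) (Fin (d * M)) ℝ)
    (B : Matrix (Fin (d * M)) (Fin L × Fin N) ℝ)
    (C : Matrix (Fin L × Fin N) (Fin L × Fin N) ℝ)
    (Di : Fin N → ℝ) (hDi : ∀ i, 0 < Di i)
    (Xb Yb : Fin N → Matrix (Fin L) (Fin L) ℝ)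
    (hA : A.PosDef) (hC : C.PosDef)
    (hE : (Matrix.fromBlocks A B Bᵀ C).PosDef)
    (hXY : ∀ i, Eigencomplementary (Xb i) (Yb i)) :
    IsUnit (Matrix.fromBlocks
      (Matrix.fromBlocks A B Bᵀ C)
      (Matrix.fromRows (0 : Matrix (Fin (d * M)) (Fin L × Fin N) ℝ)
        (Matrix.blockDiagonal fun i => Di i • (1 : Matrix (Fin L) (Fin L) ℝ)))
      (Matrix.fromCols (0 : Matrix (Fin L × Fin N) (Fin (d * M)) ℝ)
        (Matrix.blockDiagonal Xb))
      (Matrix.blockDiagonal Yb)) := by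
  have hkey : ∀ i (v w : Fin L → ℝ), Xb i *ᵥ v + Yb i *ᵥ w = 0 → 0 ≤ v ⬝ᵥ w :=
    fun i v w h => block_key (hXY i) v w h
  rw [Matrix.isUnit_iff_isUnit_det, isUnit_iff_ne_zero]
  intro hdet
  obtain ⟨z, hz0, hz⟩ := Matrix.exists_mulVec_eq_zero_iff.mpr hdet
  set Xblk := Matrix.blockDiagonal Xb
  set Yblk := Matrix.blockDiagonal Yb
  set Dblk := Matrix.blockDiagonal fun i => Di i • (1 : Matrix (Fin L) (Fin L) ℝ)
  set u : Fin (d * M) → ℝ := fun j => z (Sum.inl (Sum.inl j)) with hu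
  set vv : Fin L × Fin N → ℝ := fun j => z (Sum.inl (Sum.inr j)) with hvv
  set b : Fin L × Fin N → ℝ := fun j => z (Sum.inr j) with hb
  have hzdecomp : z = Sum.elim (Sum.elim u vv) b := by
    funext j
    rcases j with (j | j) | j <;> rfl
  rw [hzdecomp, Matrix.fromBlocks_mulVec] at hz
  have hzTop := congrFun hz
  have hTop : (Matrix.fromBlocks A B Bᵀ C) *ᵥ Sum.elim u vv
      + Sum.elim (0 : Fin (d*M) → ℝ) (Dblk *ᵥ b) = 0 := by
    have h1 : ((Matrix.fromBlocks A B Bᵀ C) *ᵥ Sum.elim u vv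
        + (Matrix.fromRows 0 Dblk) *ᵥ b) = 0 := by
      funext j; exact hzTop (Sum.inl j)
    rwa [Matrix.fromRows_mulVec, Matrix.zero_mulVec] at h1
  have hBot : Xblk *ᵥ vv + Yblk *ᵥ b = 0 := by
    have h1 : (Matrix.fromCols 0 Xblk) *ᵥ Sum.elim u vv + Yblk *ᵥ b = 0 := by
      funext j; exact hzTop (Sum.inr j)
    rwa [Matrix.fromCols_mulVec_sumElim, Matrix.zero_mulVec, zero_add] at h1
  -- block equations
  have hBlock : ∀ i : Fin N, Xb i *ᵥ (fun l => vv (l, i)) + Yb i *ᵥ (fun l => b (l, i)) = 0 := by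
    intro i
    funext l
    have := congrFun hBot (l, i)
    simpa [Xblk, Yblk, blockDiag_mulVec] using this
  -- Dblk action
  have hDact : ∀ (x : Fin L × Fin N → ℝ) l i, (Dblk *ᵥ x) (l, i) = Di i * x (l, i) := by
    intro x l i
    rw [blockDiag_mulVec]
    simp [Matrix.smul_mulVec, Matrix.one_mulVec]
  -- nonnegativity of vv ⬝ᵥ Dblk b
  have hs : 0 ≤ vv ⬝ᵥ (Dblk *ᵥ b) := by
    rw [dot_split]
    apply Finset.sum_nonneg
    intro i _
    have h1 : (fun l => vv (l, i)) ⬝ᵥ (fun l => (Dblk *ᵥ b) (l, i))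
        = Di i * ((fun l => vv (l, i)) ⬝ᵥ (fun l => b (l, i))) := by
      simp only [dotProduct, hDact, Finset.mul_sum]
      congr 1; funext l; ring
    rw [h1]
    exact mul_nonneg (le_of_lt (hDi i)) (hkey i _ _ (hBlock i))
  -- E positive definite forces u = vv = 0
  have hzE : Sum.elim u vv = 0 := by
    by_contra hne
    have hpos := hE.dotProduct_mulVec_pos hne
    have hEv : (Matrix.fromBlocks A B Bᵀ C) *ᵥ Sum.elim u vv
        = -(Sum.elim (0 : Fin (d*M) → ℝ) (Dblk *ᵥ b)) := by
      rw [eq_neg_iff_add_eq_zero]; exact hTop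
    rw [hEv] at hpos
    simp only [star_trivial, dotProduct_neg] at hpos
    rw [sumElim_dotProduct_sumElim] at hpos
    simp only [dotProduct_zero, zero_add] at hpos
    linarith
  have hu0 : u = 0 := by funext j; exact congrFun hzE (Sum.inl j)
  have hvv0 : vv = 0 := by funext j; exact congrFun hzE (Sum.inr j)
  -- then Dblk b = 0 so b = 0
  have hDb : Sum.elim (0 : Fin (d*M) → ℝ) (Dblk *ᵥ b) = 0 := by
    have := hTop
    rw [hzE, Matrix.mulVec_zero, zero_add] at this
    exact this
  have hb0 : b = 0 := by
    funext j
    rcases j with ⟨l, i⟩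
    have h1 : (Dblk *ᵥ b) (l, i) = 0 := by
      have := congrFun hDb (Sum.inr (l, i)); exact this
    rw [hDact] at h1
    have := (hDi i).ne'
    exact (mul_eq_zero.mp h1).resolve_left this
  apply hz0
  rw [hzdecomp, hu0, hvv0, hb0]
  funext j
  rcases j with (j | j) | j <;> rfl
end

section
/- Let F = S D_F Sᵀ and G = S D_G Sᵀ, where S ∈ ℝ^{L×L} is orthogonal, D_F is diagonal with all diagonal entries ≤ 0, and D_G is diagonal with all diagonal entries ≥ 0, and suppose both F and G are singular. Then the direct sum of the eigenspaces of F associated with its negative eigenvalues equals the kernel of G if and only if D_F D_G = 0 and, for each index j ∈ {1,…,L}, at least one of the diagonal entries (D_F)_{jj}, (D_G)_{jj} is nonzero. -/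
open Matrix

/-- For `F = S D_F Sᵀ`, `G = S D_G Sᵀ` with `S` orthogonal, `D_F` diagonal with
nonpositive entries, `D_G` diagonal with nonnegative entries, both `F` and `G`
singular, the direct sum of the eigenspaces of `F` for its negative eigenvalues
equals `ker G` iff `D_F D_G = 0` and for each `j` at least one of `(D_F)_{jj}`,
`(D_G)_{jj}` is nonzero. -/
theorem stmt7 {L : ℕ} (S DF DG : Matrix (Fin L) (Fin L) ℝ)
    (hS : S * Sᵀ = 1) (hDF : DF.IsDiag) (hDG : DG.IsDiag)
    (hDFle : ∀ j, DF j j ≤ 0) (hDGge : ∀ j, 0 ≤ DG j j)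
    (hFsing : ¬ IsUnit (S * DF * Sᵀ)) (hGsing : ¬ IsUnit (S * DG * Sᵀ)) :
    (⨆ ξ : {x : ℝ // x < 0}, Eig (S * DF * Sᵀ) ξ.1) = Eig (S * DG * Sᵀ) 0 ↔
      (DF * DG = 0 ∧ ∀ j, DF j j ≠ 0 ∨ DG j j ≠ 0) := by
  have hS' : Sᵀ * S = 1 := mul_eq_one_comm.mp hS
  have hStS : ∀ u : Fin L → ℝ, Sᵀ *ᵥ (S *ᵥ u) = u := by
    intro u; rw [Matrix.mulVec_mulVec, hS', Matrix.one_mulVec]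
  have hSSt : ∀ u : Fin L → ℝ, S *ᵥ (Sᵀ *ᵥ u) = u := by
    intro u; rw [Matrix.mulVec_mulVec, hS, Matrix.one_mulVec]
  have hDFd : DF = Matrix.diagonal DF.diag := hDF.diagonal_diag.symm
  have hDGd : DG = Matrix.diagonal DG.diag := hDG.diagonal_diag.symm
  -- conjugation characterization of eigenspaces
  have conj : ∀ (D : Matrix (Fin L) (Fin L) ℝ) (ξ : ℝ) (x : Fin L → ℝ),
      x ∈ Eig (S * D * Sᵀ) ξ ↔ D *ᵥ (Sᵀ *ᵥ x) = ξ • (Sᵀ *ᵥ x) := by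
    intro D ξ x
    rw [Eig, Module.End.mem_eigenspace_iff, Matrix.toLin'_apply]
    constructor
    · intro h
      have h2 := congrArg (fun v => Sᵀ *ᵥ v) h
      simp only [Matrix.mulVec_mulVec, Matrix.mulVec_smul] at h2
      rw [show Sᵀ * (S * D * Sᵀ) = D * Sᵀ by
        rw [← Matrix.mul_assoc, ← Matrix.mul_assoc, hS', Matrix.one_mul]] at h2
      rwa [← Matrix.mulVec_mulVec] at h2
    · intro h
      have h2 := congrArg (fun v => S *ᵥ v) h
      simp only [Matrix.mulVec_mulVec, Matrix.mulVec_smul] at h2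
      rwa [hS, Matrix.one_mulVec, ← Matrix.mul_assoc] at h2
  -- kernel of G characterization
  have Gmem : ∀ x : Fin L → ℝ, x ∈ Eig (S * DG * Sᵀ) 0 ↔
      ∀ j, DG j j * (Sᵀ *ᵥ x) j = 0 := by
    intro x
    rw [conj, zero_smul, funext_iff]
    constructor
    · intro h j
      have := h j
      rwa [hDGd, Matrix.mulVec_diagonal] at this
    · intro h j
      rw [hDGd, Matrix.mulVec_diagonal]
      exact h j
  -- sup of negative eigenspaces characterization
  have W : Submodule ℝ (Fin L → ℝ) :=
    { carrier := {x | ∀ j, DF j j = 0 → (Sᵀ *ᵥ x) j = 0}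
      add_mem' := by
        intro a b ha hb j hj
        simp [Matrix.mulVec_add, ha j hj, hb j hj]
      zero_mem' := by intro j hj; simp
      smul_mem' := by
        intro c a ha j hj
        simp [Matrix.mulVec_smul, ha j hj] }
  have Fmem : ∀ x : Fin L → ℝ,
      (x ∈ ⨆ ξ : {x : ℝ // x < 0}, Eig (S * DF * Sᵀ) ξ.1) ↔
      ∀ j, DF j j = 0 → (Sᵀ *ᵥ x) j = 0 := by
    intro x
    constructor
    · intro hx
      have hle : (⨆ ξ : {x : ℝ // x < 0}, Eig (S * DF * Sᵀ) ξ.1) ≤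
          { carrier := {x | ∀ j, DF j j = 0 → (Sᵀ *ᵥ x) j = 0}
            add_mem' := by
              intro a b ha hb j hj
              simp [Matrix.mulVec_add, ha j hj, hb j hj]
            zero_mem' := by intro j hj; simp
            smul_mem' := by
              intro c a ha j hj
              simp [Matrix.mulVec_smul, ha j hj] } := by
        apply iSup_le
        rintro ⟨ξ, hξ⟩ y hy
        rw [conj] at hy
        intro j hj
        have := congrFun hy j
        rw [hDFd, Matrix.mulVec_diagonal] at this
        simp only [Matrix.diag_apply, Pi.smul_apply, smul_eq_mul] at this
        rw [hj, zero_mul] at this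
        exact (mul_eq_zero.mp this.symm).resolve_left (ne_of_lt hξ)
      exact hle hx
    · intro hx
      set y := Sᵀ *ᵥ x with hy
      have hxy : x = ∑ j, Matrix.mulVecLin S (Pi.single j (y j)) := by
        rw [← map_sum, Finset.univ_sum_single]
        show x = S *ᵥ y
        rw [hy, hSSt]
      rw [hxy]
      apply Submodule.sum_mem
      intro j _
      by_cases hyj : y j = 0
      · rw [hyj, Pi.single_zero, map_zero]; exact Submodule.zero_mem _
      · have hj : DF j j ≠ 0 := fun h => hyj (hx j h)
        have hjlt : DF j j < 0 := lt_of_le_of_ne (hDFle j) hj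
        refine le_iSup (fun ξ : {x : ℝ // x < 0} => Eig (S * DF * Sᵀ) ξ.1)
          ⟨DF j j, hjlt⟩ ?_
        rw [conj]
        simp only [Matrix.mulVecLin_apply, hStS]
        rw [hDFd, Matrix.diagonal_mulVec_single]
        funext k
        by_cases hk : k = j
        · subst hk
          simp [mul_comm]
        · simp [Pi.single_eq_of_ne hk]
  -- translate DF * DG = 0
  have hprod : DF * DG = 0 ↔ ∀ j, DF j j * DG j j = 0 := by
    constructor
    · intro h j
      rw [hDFd, hDGd, Matrix.diagonal_mul_diagonal] at h
      have := congrFun (congrFun h j) j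
      simpa using this
    · intro h
      rw [hDFd, hDGd, Matrix.diagonal_mul_diagonal]
      ext i k
      by_cases hik : i = k
      · subst hik; simpa using h i
      · simp [Matrix.diagonal_apply_ne _ hik]
  rw [SetLike.ext_iff]
  constructor
  · intro hEq
    have key : ∀ j, DF j j ≠ 0 ↔ DG j j = 0 := by
      intro j
      have h := hEq (S *ᵥ Pi.single j 1)
      rw [Fmem, Gmem] at h
      simp only [hStS] at h
      constructor
      · intro hF
        have := h.mp (by
          intro k hk
          by_cases hkj : k = j
          · subst hkj; exact absurd hk hF
          · simp [Pi.single_eq_of_ne hkj]) j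
        simpa using this
      · intro hG hF
        have := h.mpr (by
          intro k
          by_cases hkj : k = j
          · subst hkj; simp [hG]
          · simp [Pi.single_eq_of_ne hkj]) j hF
        simp at this
    constructor
    · rw [hprod]
      intro j
      by_cases hF : DF j j = 0
      · rw [hF, zero_mul]
      · rw [(key j).mp hF, mul_zero]
    · intro j
      by_cases hF : DF j j = 0
      · right
        intro hG
        exact ((key j).mpr hG) hF
      · left; exact hF
  · rintro ⟨h1, h2⟩ x
    rw [hprod] at h1
    have key : ∀ j, DF j j ≠ 0 ↔ DG j j = 0 := by
      intro j
      constructor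
      · intro hF
        exact (mul_eq_zero.mp (h1 j)).resolve_left hF
      · intro hG hF
        exact (h2 j).resolve_left (not_not.mpr hF) hG
    rw [Fmem, Gmem]
    constructor
    · intro h j
      by_cases hF : DF j j = 0
      · rw [h j hF, mul_zero]
      · rw [(key j).mp hF, zero_mul]
    · intro h j hF
      have hG : DG j j ≠ 0 := fun hg => ((key j).mpr hg) hF
      exact (mul_eq_zero.mp (h j)).resolve_left hG
end

section
/- Let L be a positive integer, σ > 0, ρ > 0, and let b, c ∈ ℝ^L with v := c + ρ b satisfy max{σ, |v|} · c = σ · v. Then |c| ≤ σ; if |c| < σ then b = 0; and if |c| = σ then there exists a constant t ≥ 0 with b = t · c. -/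
/-- The Euclidean norm of a vector in `ℝ^L`. -/
noncomputable def euclNorm {L : ℕ} (x : Fin L → ℝ) : ℝ :=
  Real.sqrt (∑ i, x i ^ 2)

lemma euclNorm_smul {L : ℕ} (a : ℝ) (x : Fin L → ℝ) :
    euclNorm (a • x) = |a| * euclNorm x := by
  unfold euclNorm
  have : ∑ i, (a • x) i ^ 2 = a ^ 2 * ∑ i, x i ^ 2 := by
    rw [Finset.mul_sum]
    refine Finset.sum_congr rfl fun i _ => by simp [mul_pow]
  rw [this, Real.sqrt_mul (sq_nonneg a), Real.sqrt_sq_eq_abs]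

theorem stmt10 {L : ℕ} (hL : 0 < L) (σ ρ : ℝ) (hσ : 0 < σ) (hρ : 0 < ρ)
    (b c : Fin L → ℝ)
    (hcond : max σ (euclNorm (c + ρ • b)) • c = σ • (c + ρ • b)) :
    euclNorm c ≤ σ ∧ (euclNorm c < σ → b = 0) ∧
      (euclNorm c = σ → ∃ t : ℝ, 0 ≤ t ∧ b = t • c) := by
  set v : Fin L → ℝ := c + ρ • b with hv
  rcases le_or_gt (euclNorm v) σ with h | h
  · rw [max_eq_left h] at hcond
    have hcv : c = v := smul_right_injective (Fin L → ℝ) hσ.ne' hcond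
    have hρb : ρ • b = 0 := by
      have := hcv
      rw [hv] at this
      have h2 := congrArg (fun x => x - c) this
      simpa using h2.symm
    have hb : b = 0 := by
      rcases smul_eq_zero.mp hρb with h' | h'
      · exact absurd h' hρ.ne'
      · exact h'
    exact ⟨hcv ▸ h, fun _ => hb, fun _ => ⟨0, le_refl 0, by simp [hb]⟩⟩
  · rw [max_eq_right h.le] at hcond
    have hvpos : 0 < euclNorm v := hσ.trans h
    have hc : c = (σ / euclNorm v) • v := by
      have h2 := congrArg (fun x => (euclNorm v)⁻¹ • x) hcond
      simp only [smul_smul, inv_mul_cancel₀ hvpos.ne', one_smul] at h2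
      rw [h2, div_eq_inv_mul]
    have hnc : euclNorm c = σ := by
      rw [hc, euclNorm_smul, abs_of_pos (div_pos hσ hvpos),
        div_mul_cancel₀ _ hvpos.ne']
    refine ⟨hnc.le, fun hlt => absurd hnc hlt.ne, fun _ => ?_⟩
    have hvc : v = (euclNorm v / σ) • c := by
      rw [hc, smul_smul]
      have h2 : euclNorm v / σ * (σ / euclNorm v) = 1 := by
        field_simp
      rw [h2, one_smul]
    have hb : b = ((euclNorm v / σ - 1) / ρ) • c := by
      have hρb : ρ • b = v - c := by rw [hv]; abel
      have : ρ • b = (euclNorm v / σ - 1) • c := by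
        rw [hρb]
        nth_rewrite 1 [hvc]
        rw [sub_smul, one_smul]
      have h3 := congrArg (fun x => ρ⁻¹ • x) this
      simp only [smul_smul, inv_mul_cancel₀ hρ.ne', one_smul] at h3
      rw [h3]; congr 1; ring
    refine ⟨(euclNorm v / σ - 1) / ρ, ?_, hb⟩
    have h1 : 1 ≤ euclNorm v / σ := (one_le_div hσ).mpr h.le
    exact div_nonneg (by linarith) hρ.le
end

section
/- Let L be a positive integer, σ > 0, ρ > 0, and let b, c ∈ ℝ^L with v := c + ρ b satisfy max{σ, |v|} · c = σ · v. Let τ ∈ [0,1] be such that τ = 0 if |v| < σ and τ = 1 if |v| > σ. Define the matrices X := τ ρ (c (v/|v|)ᵀ) − ρ σ I and Y := τ (c (v/|v|)ᵀ) + τ (|v| − σ) I in ℝ^{L×L} (if |v| < σ then, since τ = 0, these reduce to X = −ρσ I and Y = 0, so no division by a possibly vanishing |v| occurs). Then the pair (X, Y) is eigencomplementary. -/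
open Matrix

lemma vecMulVec_mulVec' {L : ℕ} (a b x : Fin L → ℝ) :
    (vecMulVec a b) *ᵥ x = (b ⬝ᵥ x) • a := by
  ext i
  simp only [mulVec, dotProduct, vecMulVec_apply, Pi.smul_apply, smul_eq_mul, Finset.sum_mul]
  exact Finset.sum_congr rfl fun j _ => by ring

lemma simDiagAux {L : ℕ} (M : Matrix (Fin L) (Fin L) ℝ) (hM : M.IsHermitian)
    (a b a' b' : ℝ) :
    SimDiag (a • M + b • 1) (a' • M + b' • 1) := by
  set S : Matrix (Fin L) (Fin L) ℝ := (hM.eigenvectorUnitary : Matrix (Fin L) (Fin L) ℝ) with hSdef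
  set D : Matrix (Fin L) (Fin L) ℝ := diagonal (RCLike.ofReal ∘ hM.eigenvalues) with hDdef
  have hstar : star S = Sᵀ := by
    rw [Matrix.star_eq_conjTranspose, conjTranspose_eq_transpose_of_trivial]
  have hS : S * Sᵀ = 1 := by
    rw [← hstar]
    exact (Matrix.mem_unitaryGroup_iff).mp (hM.eigenvectorUnitary).2
  have hspec : M = S * D * Sᵀ := by
    rw [← hstar]; exact hM.spectral_theorem
  have key : ∀ u w : ℝ, u • M + w • 1 = S * (u • D + w • 1) * Sᵀ := by
    intro u w
    rw [mul_add, add_mul, mul_smul_comm, smul_mul_assoc, mul_smul_comm, smul_mul_assoc,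
      mul_one, hS, ← hspec]
  exact ⟨S, a • D + b • 1, a' • D + b' • 1, hS,
    ((isDiag_diagonal _).smul a).add ((isDiag_one).smul b),
    ((isDiag_diagonal _).smul a').add ((isDiag_one).smul b'),
    key a b, key a' b'⟩

/-- For `v = c + ρ b` satisfying `max{σ, |v|} c = σ v` and a suitable `τ ∈ [0,1]`,
the matrices `X = τρ c (v/|v|)ᵀ − ρσ I` and `Y = τ c (v/|v|)ᵀ + τ(|v| − σ) I`
form an eigencomplementary pair. -/
theorem stmt15 {L : ℕ} (hL : 0 < L) (σ ρ : ℝ) (hσ : 0 < σ) (hρ : 0 < ρ)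
    (b c : Fin L → ℝ) (v : Fin L → ℝ) (hv : v = c + ρ • b)
    (hcond : max σ (euclNorm v) • c = σ • v)
    (τ : ℝ) (hτ : τ ∈ Set.Icc (0 : ℝ) 1)
    (hτ0 : euclNorm v < σ → τ = 0) (hτ1 : σ < euclNorm v → τ = 1) :
    Eigencomplementary
      ((τ * ρ) • Matrix.vecMulVec c ((euclNorm v)⁻¹ • v) -
        (ρ * σ) • (1 : Matrix (Fin L) (Fin L) ℝ))
      (τ • Matrix.vecMulVec c ((euclNorm v)⁻¹ • v) +
        (τ * (euclNorm v - σ)) • (1 : Matrix (Fin L) (Fin L) ℝ)) := by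
  obtain ⟨hτ0', hτ1'⟩ := hτ
  set n : ℝ := euclNorm v with hn
  have hnn : (0:ℝ) ≤ n := Real.sqrt_nonneg _
  have hm : (0:ℝ) < max σ n := lt_of_lt_of_le hσ (le_max_left _ _)
  have hvv : v ⬝ᵥ v = n ^ 2 := by
    rw [hn]
    unfold euclNorm
    rw [Real.sq_sqrt (by positivity)]
    simp [dotProduct, sq]
  set κ : ℝ := (max σ n)⁻¹ * σ * n⁻¹ with hκdef
  have hκ : 0 ≤ κ := by positivity
  set M0 : Matrix (Fin L) (Fin L) ℝ := vecMulVec c (n⁻¹ • v) with hM0def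
  have hc : c = ((max σ n)⁻¹ * σ) • v := by
    rw [← smul_smul, ← hcond, inv_smul_smul₀ (ne_of_gt hm)]
  have hM0 : M0 = κ • vecMulVec v v := by
    rw [hM0def, hc]
    ext i j
    simp only [vecMulVec_apply, Pi.smul_apply, Matrix.smul_apply, smul_eq_mul, hκdef]
    ring
  have hM0v : ∀ x, M0 *ᵥ x = (κ * (v ⬝ᵥ x)) • v := by
    intro x
    rw [hM0, smul_mulVec, vecMulVec_mulVec', smul_smul]
  have hM0s : M0ᵀ = M0 := by
    rw [hM0, transpose_smul]
    congr 1
    ext i j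
    simp [vecMulVec_apply, mul_comm]
  have hM0h : M0.IsHermitian := by
    rw [Matrix.IsHermitian, conjTranspose_eq_transpose_of_trivial]; exact hM0s
  have hXmul : ∀ x, ((τ * ρ) • M0 - (ρ * σ) • (1 : Matrix (Fin L) (Fin L) ℝ)) *ᵥ x
      = (τ * ρ * (κ * (v ⬝ᵥ x))) • v - (ρ * σ) • x := by
    intro x
    rw [sub_mulVec, smul_mulVec, smul_mulVec, one_mulVec, hM0v, smul_smul]
  have hYmul : ∀ x, (τ • M0 + (τ * (n - σ)) • (1 : Matrix (Fin L) (Fin L) ℝ)) *ᵥ x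
      = (τ * (κ * (v ⬝ᵥ x))) • v + (τ * (n - σ)) • x := by
    intro x
    rw [add_mulVec, smul_mulVec, smul_mulVec, one_mulVec, hM0v, smul_smul]
  have hdsn : ∀ x : Fin L → ℝ, 0 ≤ x ⬝ᵥ x := by
    intro x; exact Finset.sum_nonneg fun i _ => mul_self_nonneg _
  have hCS : ∀ x : Fin L → ℝ, (v ⬝ᵥ x) ^ 2 ≤ n ^ 2 * (x ⬝ᵥ x) := by
    intro x
    have h1 := Finset.sum_mul_sq_le_sq_mul_sq Finset.univ v x
    have h2 : ∑ i, v i ^ 2 = n ^ 2 := by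
      rw [hn]; unfold euclNorm; rw [Real.sq_sqrt (by positivity)]
    have h3 : ∑ i, x i ^ 2 = x ⬝ᵥ x := by
      simp [dotProduct, sq]
    rw [h2, h3] at h1
    simpa [dotProduct] using h1
  have hκn : κ * n ^ 2 ≤ σ := by
    rcases eq_or_lt_of_le hnn with h0 | h0
    · rw [hκdef, ← h0]; simp; exact hσ.le
    · have hmn : n ≤ max σ n := le_max_right _ _
      have : κ * n ^ 2 = σ * (n / max σ n) := by
        rw [hκdef]
        field_simp
      rw [this]
      have h4 : n / max σ n ≤ 1 := div_le_one_of_le₀ hmn (le_of_lt hm)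
      nlinarith
  refine ⟨?_, ?_, ?_, ?_, ?_, ?_⟩
  · -- X symm
    rw [Matrix.IsSymm, transpose_sub, transpose_smul, transpose_smul, transpose_one, hM0s]
  · rw [Matrix.IsSymm, transpose_add, transpose_smul, transpose_smul, transpose_one, hM0s]
  · -- -X PSD
    rw [posSemidef_iff_dotProduct_mulVec]
    constructor
    · rw [Matrix.IsHermitian, conjTranspose_eq_transpose_of_trivial, transpose_neg,
        transpose_sub, transpose_smul, transpose_smul, transpose_one, hM0s]
    · intro x
      rw [neg_mulVec, hXmul]
      have h1 : (v ⬝ᵥ x) ^ 2 ≤ n ^ 2 * (x ⬝ᵥ x) := hCS x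
      have h2 : 0 ≤ x ⬝ᵥ x := hdsn x
      simp only [star_trivial, dotProduct_neg, dotProduct_sub, dotProduct_smul, smul_eq_mul,
        le_neg, neg_zero, neg_sub, sub_nonneg]
      rw [dotProduct_comm x v]
      nlinarith [mul_nonneg (mul_nonneg hρ.le hκ) (sq_nonneg (v ⬝ᵥ x)),
        mul_le_mul_of_nonneg_left h1 (mul_nonneg hρ.le hκ),
        mul_le_mul_of_nonneg_right hκn (mul_nonneg hρ.le h2)]
  · -- Y PSD
    rw [posSemidef_iff_dotProduct_mulVec]
    constructor
    · rw [Matrix.IsHermitian, conjTranspose_eq_transpose_of_trivial, transpose_add,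
        transpose_smul, transpose_smul, transpose_one, hM0s]
    · intro x
      rw [hYmul]
      simp only [star_trivial, dotProduct_add, dotProduct_smul, smul_eq_mul]
      rw [dotProduct_comm x v]
      rcases lt_or_ge n σ with hlt | hle
      · rw [hτ0 hlt]; simp
      · have h2 : 0 ≤ x ⬝ᵥ x := hdsn x
        have h3 : 0 ≤ n - σ := by linarith
        nlinarith [mul_nonneg (mul_nonneg hτ0' hκ) (sq_nonneg (v ⬝ᵥ x)),
          mul_nonneg (mul_nonneg hτ0' h3) h2]
  · -- SimDiag
    have hX : (τ * ρ) • M0 - (ρ * σ) • (1 : Matrix (Fin L) (Fin L) ℝ)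
        = (τ * ρ) • M0 + (-(ρ * σ)) • (1 : Matrix (Fin L) (Fin L) ℝ) := by
      rw [neg_smul, ← sub_eq_add_neg]
    rw [hX]
    exact simDiagAux M0 hM0h _ _ _ _
  · -- eigen-complement condition
    intro hX hY
    have hmem : ∀ (M : Matrix (Fin L) (Fin L) ℝ) (ξ : ℝ) (z : Fin L → ℝ),
        z ∈ Eig M ξ ↔ M *ᵥ z = ξ • z := by
      intro M ξ z
      rw [Eig, Module.End.mem_eigenspace_iff, Matrix.toLin'_apply]
    -- extract singular vectors
    have hXdet : ((τ * ρ) • M0 - (ρ * σ) • (1 : Matrix (Fin L) (Fin L) ℝ)).det = 0 := by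
      by_contra h
      exact hX ((isUnit_iff_isUnit_det _).2 (isUnit_iff_ne_zero.2 h))
    obtain ⟨x, hx0, hxX⟩ := (Matrix.exists_mulVec_eq_zero_iff).2 hXdet
    have hYdet : (τ • M0 + (τ * (n - σ)) • (1 : Matrix (Fin L) (Fin L) ℝ)).det = 0 := by
      by_contra h
      exact hY ((isUnit_iff_isUnit_det _).2 (isUnit_iff_ne_zero.2 h))
    obtain ⟨y, hy0, hyY⟩ := (Matrix.exists_mulVec_eq_zero_iff).2 hYdet
    have hρσ : ρ * σ ≠ 0 := by positivity
    -- σ ≤ n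
    have hσn : σ ≤ n := by
      by_contra h
      push_neg at h
      rw [hXmul, hτ0 h] at hxX
      simp only [zero_mul, zero_smul, zero_sub, neg_eq_zero, smul_eq_zero] at hxX
      rcases hxX with h' | h'
      · exact hρσ h'
      · exact hx0 h'
    have hnpos : 0 < n := lt_of_lt_of_le hσ hσn
    have hn0 : n ≠ 0 := ne_of_gt hnpos
    have hκn2 : κ * n ^ 2 = σ := by
      rw [hκdef, max_eq_right hσn, sq]
      calc n⁻¹ * σ * n⁻¹ * (n * n) = σ * (n⁻¹ * n) * (n⁻¹ * n) := by ring
      _ = σ := by rw [inv_mul_cancel₀ hn0]; ring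
    -- τ = 1
    have hxv : (τ * ρ * (κ * (v ⬝ᵥ x))) • v = (ρ * σ) • x := by
      rw [hXmul] at hxX
      exact sub_eq_zero.mp hxX
    have hτeq : τ = 1 := by
      by_contra hne
      have h1 : τ * ρ * (κ * (v ⬝ᵥ x)) * (v ⬝ᵥ v) = ρ * σ * (v ⬝ᵥ x) := by
        have := congrArg (fun w => v ⬝ᵥ w) hxv
        simpa only [dotProduct_smul, smul_eq_mul, dotProduct_comm v x] using this
      have h4 : (v ⬝ᵥ x) * (ρ * σ * (1 - τ)) = 0 := by
        linear_combination (τ * ρ * (κ * (v ⬝ᵥ x))) * hvv + (τ * ρ * (v ⬝ᵥ x)) * hκn2 - h1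
      have h5 : ρ * σ * (1 - τ) ≠ 0 := by
        apply mul_ne_zero hρσ
        intro h; apply hne; linarith
      have hα : v ⬝ᵥ x = 0 := by
        rcases mul_eq_zero.mp h4 with h | h
        · exact h
        · exact absurd h h5
      rw [hα] at hxv
      simp only [mul_zero, zero_smul, eq_comm, smul_eq_zero] at hxv
      rcases hxv with h | h
      · exact hρσ h
      · exact hx0 h
    -- n = σ
    have hnσ : n = σ := by
      have h1 : (τ * (κ * (v ⬝ᵥ y))) • v + (τ * (n - σ)) • y = 0 := by
        rw [← hYmul]; exact hyY
      have h2 : τ * (κ * (v ⬝ᵥ y)) * (v ⬝ᵥ v) + τ * (n - σ) * (v ⬝ᵥ y) = 0 := by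
        have := congrArg (fun w => v ⬝ᵥ w) h1
        simpa only [dotProduct_add, dotProduct_smul, smul_eq_mul, dotProduct_zero,
          dotProduct_comm v y] using this
      rw [hτeq] at h2
      have hβ : v ⬝ᵥ y = 0 := by
        have h3 : (v ⬝ᵥ y) * n = 0 := by
          linear_combination h2 - ((v ⬝ᵥ y) * κ) * hvv - (v ⬝ᵥ y) * hκn2
        rcases mul_eq_zero.mp h3 with h | h
        · exact h
        · exact absurd h (ne_of_gt hnpos)
      rw [hβ] at h1
      simp only [mul_zero, zero_smul, zero_add, smul_eq_zero] at h1
      rcases h1 with h | h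
      · have : n - σ = 0 := by
          rcases mul_eq_zero.mp h with h' | h'
          · rw [hτeq] at h'; norm_num at h'
          · exact h'
        linarith
      · exact absurd h hy0
    -- the eigenspace identity
    apply le_antisymm
    · apply iSup_le
      rintro ⟨ξ, hξ⟩
      intro z hz
      rw [hmem] at hz ⊢
      rw [hXmul] at hz
      rw [hYmul]
      have h1 : τ * ρ * (κ * (v ⬝ᵥ z)) * (v ⬝ᵥ v) - ρ * σ * (v ⬝ᵥ z) = ξ * (v ⬝ᵥ z) := by
        have := congrArg (fun w => v ⬝ᵥ w) hz
        simpa only [dotProduct_sub, dotProduct_smul, smul_eq_mul, dotProduct_comm v z] using this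
      rw [hτeq] at h1
      have hα : v ⬝ᵥ z = 0 := by
        have h2 : ξ * (v ⬝ᵥ z) = 0 := by
          linear_combination (ρ * (κ * (v ⬝ᵥ z))) * hvv + (ρ * (v ⬝ᵥ z)) * hκn2 - h1
        rcases mul_eq_zero.mp h2 with h | h
        · exact absurd h (ne_of_lt hξ)
        · exact h
      rw [hα, hnσ]
      simp
    · intro z hz
      rw [hmem] at hz
      rw [hYmul] at hz
      have hz' : (τ * (κ * (v ⬝ᵥ z))) • v = 0 := by
        rw [hnσ] at hz
        simpa using hz
      have hle : Eig ((τ * ρ) • M0 - (ρ * σ) • (1 : Matrix (Fin L) (Fin L) ℝ)) (-(ρ * σ))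
          ≤ ⨆ ξ : {x : ℝ // x < 0},
            Eig ((τ * ρ) • M0 - (ρ * σ) • (1 : Matrix (Fin L) (Fin L) ℝ)) ξ.1 :=
        le_iSup (fun ξ : {x : ℝ // x < 0} =>
          Eig ((τ * ρ) • M0 - (ρ * σ) • (1 : Matrix (Fin L) (Fin L) ℝ)) ξ.1)
          ⟨-(ρ * σ), by nlinarith⟩
      apply hle
      rw [hmem, hXmul]
      have : (τ * ρ * (κ * (v ⬝ᵥ z))) • v = ρ • ((τ * (κ * (v ⬝ᵥ z))) • v) := by
        rw [smul_smul]; ring_nf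
      rw [this, hz', smul_zero, zero_sub, neg_smul]
end
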